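/- Let M be a simple connected matroid of rank r ≥ 3 on a finite ground set whose lattice of flats is a modular lattice (i.e., rk F + rk G = rk(F ∨ G) + rk(F ∧ G) for all flats F, G). Then M is not regular; that is, there exists a field over which M is not representable. -/

import Mathlib

/-! Self-contained definitions: matroid minors, rank, flats, the Möbius function of the
lattice of flats, the characteristic polynomial, the defining axioms of the
(inverse) Kazhdan–Lusztig polynomials of a matroid, and basic structural notions
(circuits, connectivity, simplicity, representability, modularity). -/

open Polynomial Matroid

namespace KL

variable {α : Type} [Fintype α]

/-- The deletion of a set `D` from the matroid `M`. -/
def del (M : Matroid α) (D : Set α) : Matroid α := M ↾ (M.E \ D)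

/-- The contraction of the matroid `M` by the set `C`, defined by duality. -/
def con (M : Matroid α) (C : Set α) : Matroid α := (del M✶ C)✶

/-- The rank of a matroid on a finite ground set: the maximal size of an independent set. -/
noncomputable def rk (M : Matroid α) : ℕ := sSup {n | ∃ I, M.Indep I ∧ I.ncard = n}

/-- The rank of a set `X` in a matroid `M`. -/
noncomputable def rkSet (M : Matroid α) (X : Set α) : ℕ := rk (M ↾ X)

/-- A matroid is loopless if every singleton of its ground set is independent. -/
def Loopless (M : Matroid α) : Prop := ∀ e ∈ M.E, M.Indep {e}

/-- A circuit of a matroid is a minimal dependent set. -/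
def Circuit (M : Matroid α) (C : Set α) : Prop :=
  M.Dep C ∧ ∀ D, M.Dep D → D ⊆ C → D = C

/-- A matroid is connected if its ground set is nonempty and every two distinct
elements of the ground set lie in a common circuit. -/
def Connected (M : Matroid α) : Prop :=
  M.E.Nonempty ∧ ∀ e f, e ∈ M.E → f ∈ M.E → e ≠ f → ∃ C, Circuit M C ∧ e ∈ C ∧ f ∈ C

/-- A matroid is simple if it has no loops and no pair of parallel elements; equivalently,
every subset of the ground set with at most two elements is independent. -/
def Simple (M : Matroid α) : Prop :=
  ∀ I : Set α, I ⊆ M.E → I.ncard ≤ 2 → M.Indep I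

/-- A matroid is representable over a field `𝔽` if there is an assignment of vectors to the
elements of the ground set such that independence coincides with linear independence. -/
def Representable (M : Matroid α) (𝔽 : Type) [Field 𝔽] : Prop :=
  ∃ (n : ℕ) (φ : α → (Fin n → 𝔽)), ∀ I : Set α,
    M.Indep I ↔ (I ⊆ M.E ∧ LinearIndependent 𝔽 (fun x : I => φ x))

/-- A matroid is regular if it is representable over every field. -/
def Regular (M : Matroid α) : Prop := ∀ (𝔽 : Type) (_ : Field 𝔽), Representable M 𝔽

/-- The lattice of flats of `M` is modular: `rk F + rk G = rk (F ∨ G) + rk (F ∧ G)` for all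
flats `F, G`, where the join of two flats is the closure of their union and their meet is
their intersection. -/
def ModularFlats (M : Matroid α) : Prop :=
  ∀ F G : Set α, M.IsFlat F → M.IsFlat G →
    rkSet M F + rkSet M G = rkSet M (M.closure (F ∪ G)) + rkSet M (F ∩ G)

open Classical in
/-- The finset of flats of a matroid on a finite ground set. -/
noncomputable def flats (M : Matroid α) : Finset (Set α) :=
  Finset.univ.filter fun F => M.IsFlat F

open Classical in
/-- The Möbius function of the lattice of flats of `M`, as a function on pairs of sets
(zero when either set is not a flat, and zero on non-ordered pairs of flats). -/
noncomputable def mob (M : Matroid α) (F G : Set α) : ℤ :=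
  letI : LocallyFiniteOrder {X : Set α // M.IsFlat X} := Fintype.toLocallyFiniteOrder
  if hF : M.IsFlat F then
    if hG : M.IsFlat G then
      IncidenceAlgebra.mu ℤ (⟨F, hF⟩ : {X : Set α // M.IsFlat X}) ⟨G, hG⟩
    else 0
  else 0

open Classical in
/-- The doubly-indexed Whitney numbers of the first kind:
`w_{i,j} = Σ μ(F,G)` over pairs of flats `F ⊆ G` with `rk F = i` and `rk G = j`. -/
noncomputable def whitney (M : Matroid α) (i j : ℕ) : ℤ :=
  ∑ F ∈ flats M, ∑ G ∈ flats M,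
    if rkSet M F = i ∧ rkSet M G = j ∧ F ⊆ G then mob M F G else 0

/-- The characteristic polynomial `χ_M(t) = Σ_{F ∈ L(M)} μ(∅,F) t^(r - rk F)`
of a (loopless) matroid. -/
noncomputable def chi (M : Matroid α) : Polynomial ℤ :=
  ∑ F ∈ flats M, C (mob M ∅ F) * X ^ (rk M - rkSet M F)

/-- The defining axioms of the Kazhdan–Lusztig polynomial assignment `M ↦ P_M(t)`:
`P_M = 1` in rank `0`; `deg P_M < r/2` for `r > 0`; and the defining recursion
`t^r P_M(t⁻¹) = Σ_{F ∈ L(M)} χ_{M_F}(t) P_{M^F}(t)`, where `t^r P_M(t⁻¹)` is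
formalized as `reflect r P_M`. -/
def IsKLPolynomial (P : Matroid α → Polynomial ℤ) : Prop :=
  (∀ N : Matroid α, Loopless N → rk N = 0 → P N = 1) ∧
  (∀ N : Matroid α, Loopless N → 0 < rk N → 2 * (P N).natDegree < rk N) ∧
  (∀ N : Matroid α, Loopless N →
    (P N).reflect (rk N) = ∑ F ∈ flats N, chi (N ↾ F) * P (con N F))

/-- The defining axioms of the inverse Kazhdan–Lusztig polynomial assignment `M ↦ Q_M(t)`:
`Q_M = 1` in rank `0`; `deg Q_M < r/2` for `r > 0`; and the defining recursion
`(-1)^r t^r Q_M(t⁻¹) = Σ_{F ∈ L(M)} (-1)^(rk F) Q_{M_F}(t) · t^(r - rk F) χ_{M^F}(t⁻¹)`,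
where `t^k p(t⁻¹)` is formalized as `reflect k p`. -/
def IsInvKLPolynomial (Q : Matroid α → Polynomial ℤ) : Prop :=
  (∀ N : Matroid α, Loopless N → rk N = 0 → Q N = 1) ∧
  (∀ N : Matroid α, Loopless N → 0 < rk N → 2 * (Q N).natDegree < rk N) ∧
  (∀ N : Matroid α, Loopless N →
    (-1 : Polynomial ℤ) ^ (rk N) * (Q N).reflect (rk N) =
      ∑ F ∈ flats N, (-1 : Polynomial ℤ) ^ (rkSet N F) * Q (N ↾ F) *
        (chi (con N F)).reflect (rk N - rkSet N F))


open Set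

variable {M : Matroid α}

lemma flat_closure (M : Matroid α) (X : Set α) : M.IsFlat (M.closure X) := by
  rw [Matroid.closure_def]
  have hne : Nonempty ↑{F : Set α | M.IsFlat F ∧ X ∩ M.E ⊆ F} :=
    ⟨⟨M.E, M.ground_isFlat, inter_subset_right⟩⟩
  rw [sInter_eq_iInter]
  exact Matroid.IsFlat.iInter fun F => F.2.1

lemma ncard_le_of_indep_subset_closure {I J : Set α} (hI : M.Indep I) (hJ : M.Indep J)
    (hJI : J ⊆ M.closure I) : J.ncard ≤ I.ncard := by
  by_contra h
  push_neg at h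
  have hlt : I.encard < J.encard := by
    rw [← (Set.toFinite I).cast_ncard_eq, ← (Set.toFinite J).cast_ncard_eq]
    exact_mod_cast h
  obtain ⟨x, hx, hxi⟩ := hI.augment hJ hlt
  exact (hI.insert_dep_iff.mpr ⟨hJI hx.1, hx.2⟩).not_indep hxi

lemma rkSet_eq_of_basis {X I : Set α} (hI : M.Indep I) (hIX : I ⊆ X)
    (hXI : X ⊆ M.closure I) : rkSet M X = I.ncard := by
  have hbdd : ∀ n ∈ {n | ∃ J, (M ↾ X).Indep J ∧ J.ncard = n}, n ≤ I.ncard := by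
    rintro n ⟨J, hJ, rfl⟩
    rw [Matroid.restrict_indep_iff] at hJ
    exact ncard_le_of_indep_subset_closure hI hJ.1 (hJ.2.trans hXI)
  have hmem : I.ncard ∈ {n | ∃ J, (M ↾ X).Indep J ∧ J.ncard = n} :=
    ⟨I, Matroid.restrict_indep_iff.mpr ⟨hI, hIX⟩, rfl⟩
  exact le_antisymm (csSup_le ⟨_, hmem⟩ hbdd) (le_csSup ⟨I.ncard, hbdd⟩ hmem)

lemma rkSet_closure_indep {I : Set α} (hI : M.Indep I) :
    rkSet M (M.closure I) = I.ncard :=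
  rkSet_eq_of_basis hI (M.subset_closure I hI.subset_ground) subset_rfl

lemma exists_mem_of_one_le_rkSet {X : Set α} (hX : 1 ≤ rkSet M X) :
    ∃ p ∈ X, p ∈ M.E := by
  have hne : {n | ∃ J, (M ↾ X).Indep J ∧ J.ncard = n}.Nonempty :=
    ⟨0, ∅, (M ↾ X).empty_indep, by simp⟩
  have hbdd : BddAbove {n | ∃ J, (M ↾ X).Indep J ∧ J.ncard = n} := by
    refine ⟨Fintype.card α, ?_⟩
    rintro n ⟨J, hJ, rfl⟩
    calc J.ncard ≤ (univ : Set α).ncard := Set.ncard_le_ncard (subset_univ J) finite_univ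
      _ = Fintype.card α := by simp [Set.ncard_univ]
  have := Nat.sSup_mem hne hbdd
  obtain ⟨J, hJ, hJcard⟩ := this
  rw [Matroid.restrict_indep_iff] at hJ
  have : J.Nonempty := by
    rw [Set.nonempty_iff_ne_empty]
    rintro rfl
    rw [Set.ncard_empty] at hJcard
    rw [rkSet, rk] at hX
    omega
  obtain ⟨p, hp⟩ := this
  exact ⟨p, hJ.2 hp, hJ.1.subset_ground hp⟩

omit [Fintype α] in
lemma rkSet_def_eq (X : Set α) : rkSet M X = sSup {n | ∃ J, (M ↾ X).Indep J ∧ J.ncard = n} := rfl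





lemma indep_pair (hs : Simple M) {a b : α} (ha : a ∈ M.E) (hb : b ∈ M.E) :
    M.Indep {a, b} := by
  refine hs _ ?_ ?_
  · exact Set.insert_subset ha (by simpa)
  · exact (Set.ncard_insert_le _ _).trans (by simp)

lemma circuit_diff_indep {C : Set α} (hC : Circuit M C) {x : α} (hx : x ∈ C) :
    M.Indep (C \ {x}) := by
  by_contra h
  have hdep : M.Dep (C \ {x}) := ⟨h, diff_subset.trans hC.1.subset_ground⟩
  have := hC.2 _ hdep diff_subset
  rw [← this] at hx
  exact hx.2 rfl

/-- every line of a simple connected modular matroid has a third point -/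
lemma exists_third_point (hs : Simple M) (hc : Connected M) (hmod : ModularFlats M)
    {a b : α} (ha : a ∈ M.E) (hb : b ∈ M.E) (hab : a ≠ b) :
    ∃ p ∈ M.closure {a, b}, p ≠ a ∧ p ≠ b ∧ p ∈ M.E := by
  obtain ⟨C, hC, haC, hbC⟩ := hc.2 a b ha hb hab
  have hCE : C ⊆ M.E := hC.1.subset_ground
  have hCfin : C.Finite := Set.toFinite C
  have habsub : ({a, b} : Set α) ⊆ C := by
    rintro x (rfl | rfl) <;> assumption
  have habI : M.Indep {a, b} := indep_pair hs ha hb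
  have hssub : ({a, b} : Set α) ⊂ C :=
    habsub.ssubset_of_ne (fun h => hC.1.not_indep (h ▸ habI))
  have hk3 : 3 ≤ C.ncard := by
    have h2 : ({a,b} : Set α).ncard < C.ncard := Set.ncard_lt_ncard hssub hCfin
    rwa [Set.ncard_pair hab] at h2
  set k := C.ncard with hk
  -- the independent set C \ {a,b}
  have hG0 : M.Indep (C \ {a, b}) := by
    refine (circuit_diff_indep hC haC).subset ?_
    intro x hx
    exact ⟨hx.1, fun h => hx.2 (by simp only [Set.mem_singleton_iff] at h; simp [h])⟩
  have hG0card : (C \ {a, b}).ncard = k - 2 := by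
    rw [Set.ncard_diff habsub (Set.toFinite _), Set.ncard_pair hab]
  -- C \ {a} is independent of size k - 1
  have hCa : M.Indep (C \ {a}) := circuit_diff_indep hC haC
  have hCacard : (C \ {a}).ncard = k - 1 := by
    rw [Set.ncard_diff_singleton_of_mem haC]
  -- a ∈ closure (C \ {a})
  have hacl : a ∈ M.closure (C \ {a}) := by
    rw [hCa.mem_closure_iff]
    left
    rw [Set.insert_diff_singleton, Set.insert_eq_self.mpr haC]
    exact hC.1
  have hCcl : C ⊆ M.closure (C \ {a}) := by
    intro x hx
    rcases eq_or_ne x a with rfl | hxa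
    · exact hacl
    · exact M.subset_closure _ (diff_subset.trans hCE) ⟨hx, hxa⟩
  -- rank computations
  set F := M.closure {a, b} with hF
  set G := M.closure (C \ {a, b}) with hG
  have hrkF : rkSet M F = 2 := by
    rw [hF, rkSet_closure_indep habI, Set.ncard_pair hab]
  have hrkG : rkSet M G = k - 2 := by
    rw [hG, rkSet_closure_indep hG0, hG0card]
  have hFG : M.closure (F ∪ G) = M.closure C := by
    rw [hF, hG, M.closure_union_closure_left_eq, M.closure_union_closure_right_eq,
      Set.union_diff_cancel habsub]
  have hrkJoin : rkSet M (M.closure (F ∪ G)) = k - 1 := by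
    rw [hFG, ← hCacard]
    refine rkSet_eq_of_basis hCa ((diff_subset).trans (M.subset_closure C hCE)) ?_
    exact M.closure_subset_closure_of_subset_closure hCcl
  have hmodeq := hmod F G (flat_closure M _) (flat_closure M _)
  rw [hrkF, hrkG, hrkJoin] at hmodeq
  have hrkMeet : rkSet M (F ∩ G) = 1 := by omega
  obtain ⟨p, hp, hpE⟩ := exists_mem_of_one_le_rkSet (M := M) (X := F ∩ G) (by omega)
  refine ⟨p, hp.1, ?_, ?_, hpE⟩
  · intro hpa
    have hp2 : a ∈ M.closure (C \ {a, b}) := by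
      have := hp.2; rw [hG] at this; rwa [hpa] at this
    have hCb : M.Indep (C \ {b}) := circuit_diff_indep hC hbC
    have hsubcl : C \ {b} ⊆ M.closure (C \ {a, b}) := by
      intro x hx
      rcases eq_or_ne x a with rfl | hxa
      · exact hp2
      · refine M.subset_closure _ (diff_subset.trans hCE) ⟨hx.1, ?_⟩
        rintro (rfl | rfl)
        · exact hxa rfl
        · exact hx.2 rfl
    have := ncard_le_of_indep_subset_closure hG0 hCb hsubcl
    rw [Set.ncard_diff_singleton_of_mem hbC, hG0card] at this
    omega
  · intro hpb
    have hp2 : b ∈ M.closure (C \ {a, b}) := by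
      have := hp.2; rw [hG] at this; rwa [hpb] at this
    have hCa' : M.Indep (C \ {a}) := circuit_diff_indep hC haC
    have hsubcl : C \ {a} ⊆ M.closure (C \ {a, b}) := by
      intro x hx
      rcases eq_or_ne x b with rfl | hxb
      · exact hp2
      · refine M.subset_closure _ (diff_subset.trans hCE) ⟨hx.1, ?_⟩
        rintro (rfl | rfl)
        · exact hx.2 rfl
        · exact hxb rfl
    have := ncard_le_of_indep_subset_closure hG0 hCa' hsubcl
    rw [Set.ncard_diff_singleton_of_mem haC, hG0card] at this
    omega

/-- two distinct lines spanning a common plane meet in a point -/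
lemma lines_meet (hmod : ModularFlats M) {x y u w : α} {B : Set α}
    (hxy : M.Indep {x, y}) (hxy' : x ≠ y) (huw : M.Indep {u, w}) (huw' : u ≠ w)
    (hB : M.Indep B) (hB3 : B.ncard = 3)
    (hBsub : B ⊆ ({x, y} : Set α) ∪ {u, w})
    (hspan : ({x, y} : Set α) ∪ {u, w} ⊆ M.closure B) :
    ∃ p, p ∈ M.E ∧ p ∈ M.closure {x, y} ∧ p ∈ M.closure {u, w} := by
  set F := M.closure {x, y} with hF
  set G := M.closure {u, w} with hG
  have hrkF : rkSet M F = 2 := by rw [hF, rkSet_closure_indep hxy, Set.ncard_pair hxy']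
  have hrkG : rkSet M G = 2 := by rw [hG, rkSet_closure_indep huw, Set.ncard_pair huw']
  have hFG : M.closure (F ∪ G) = M.closure (({x, y} : Set α) ∪ {u, w}) := by
    rw [hF, hG, M.closure_union_closure_left_eq, M.closure_union_closure_right_eq]
  have hrkJoin : rkSet M (M.closure (F ∪ G)) = 3 := by
    rw [hFG, ← hB3]
    refine rkSet_eq_of_basis hB (hBsub.trans (M.subset_closure _ ?_)) ?_
    · exact Set.union_subset hxy.subset_ground huw.subset_ground
    · exact M.closure_subset_closure_of_subset_closure hspan
  have hmodeq := hmod F G (flat_closure M _) (flat_closure M _)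
  rw [hrkF, hrkG, hrkJoin] at hmodeq
  obtain ⟨p, hp, hpE⟩ := exists_mem_of_one_le_rkSet (M := M) (X := F ∩ G) (by omega)
  exact ⟨p, hpE, hp.1, hp.2⟩

section LinAlg
variable {𝔽 V : Type} [Field 𝔽] [AddCommGroup V] [Module 𝔽 V]

lemma pair_li_coords {x y : V} (h : LinearIndependent 𝔽 ![x, y]) {c1 c2 : 𝔽}
    (hc : c1 • x + c2 • y = 0) : c1 = 0 ∧ c2 = 0 := by
  have := Fintype.linearIndependent_iff.mp h ![c1, c2] (by
    rw [Fin.sum_univ_two]; simpa using hc)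
  exact ⟨this 0, this 1⟩

lemma triple_li_coords {x y z : V} (h : LinearIndependent 𝔽 ![x, y, z]) {c1 c2 c3 : 𝔽}
    (hc : c1 • x + c2 • y + c3 • z = 0) : c1 = 0 ∧ c2 = 0 ∧ c3 = 0 := by
  have := Fintype.linearIndependent_iff.mp h ![c1, c2, c3] (by
    rw [Fin.sum_univ_three]; simpa using hc)
  exact ⟨this 0, this 1, this 2⟩

lemma resolve {x y z : V} (hxy : LinearIndependent 𝔽 ![x, y])
    (hxz : LinearIndependent 𝔽 ![x, z])
    (hyz : LinearIndependent 𝔽 ![y, z]) (hdep : ¬ LinearIndependent 𝔽 ![x, y, z]) :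
    ∃ p q : 𝔽, p ≠ 0 ∧ q ≠ 0 ∧ z = p • x + q • y := by
  obtain ⟨g, hg0, i, hgi⟩ := Fintype.not_linearIndependent_iff.mp hdep
  rw [Fin.sum_univ_three] at hg0
  simp only [Matrix.cons_val_zero, Matrix.cons_val_one, Matrix.head_cons,
    Matrix.cons_val_two, Matrix.tail_cons] at hg0
  have h2 : g 2 ≠ 0 := by
    intro h2
    rw [h2, zero_smul, add_zero] at hg0
    obtain ⟨e0, e1⟩ := pair_li_coords hxy hg0
    fin_cases i
    · exact hgi e0
    · exact hgi e1
    · exact hgi h2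
  have hp : g 0 ≠ 0 := by
    intro h0
    rw [h0, zero_smul, zero_add] at hg0
    exact h2 (pair_li_coords hyz hg0).2
  have hq : g 1 ≠ 0 := by
    intro h1
    rw [h1, zero_smul, add_zero] at hg0
    exact h2 (pair_li_coords hxz hg0).2
  refine ⟨-(g 0) / g 2, -(g 1) / g 2, div_ne_zero (neg_ne_zero.mpr hp) h2,
    div_ne_zero (neg_ne_zero.mpr hq) h2, ?_⟩
  have hz : g 2 • z = (-(g 0)) • x + (-(g 1)) • y := by
    linear_combination (norm := module) hg0
  calc z = (g 2)⁻¹ • (g 2 • z) := by rw [smul_smul, inv_mul_cancel₀ h2, one_smul]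
    _ = _ := by
        rw [hz, smul_add, smul_smul, smul_smul, ← div_eq_inv_mul, ← div_eq_inv_mul]

lemma li3_matrix {x y z : V} (h : LinearIndependent 𝔽 ![x, y, z])
    (A : Matrix (Fin 3) (Fin 3) 𝔽)
    (hA : ∀ g : Fin 3 → 𝔽, (∀ j, g 0 * A 0 j + g 1 * A 1 j + g 2 * A 2 j = 0) → g = 0) :
    LinearIndependent 𝔽 ![A 0 0 • x + A 0 1 • y + A 0 2 • z,
      A 1 0 • x + A 1 1 • y + A 1 2 • z, A 2 0 • x + A 2 1 • y + A 2 2 • z] := by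
  rw [Fintype.linearIndependent_iff]
  intro g hg
  rw [Fin.sum_univ_three] at hg
  simp only [Matrix.cons_val_zero, Matrix.cons_val_one, Matrix.head_cons,
    Matrix.cons_val_two, Matrix.tail_cons] at hg
  have hg' : (g 0 * A 0 0 + g 1 * A 1 0 + g 2 * A 2 0) • x
      + (g 0 * A 0 1 + g 1 * A 1 1 + g 2 * A 2 1) • y
      + (g 0 * A 0 2 + g 1 * A 1 2 + g 2 * A 2 2) • z = 0 := by
    linear_combination (norm := module) hg
  obtain ⟨e0, e1, e2⟩ := triple_li_coords h hg'
  have := hA g (by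
    intro j
    fin_cases j
    · exact e0
    · exact e1
    · exact e2)
  intro i
  rw [this]
  rfl

lemma li3_ne {x y z : V} (h : LinearIndependent 𝔽 ![x, y, z]) (s t : Fin 3 → 𝔽)
    (hst : s ≠ t) :
    s 0 • x + s 1 • y + s 2 • z ≠ t 0 • x + t 1 • y + t 2 • z := by
  intro hEq
  have hc : (s 0 - t 0) • x + (s 1 - t 1) • y + (s 2 - t 2) • z = 0 := by
    linear_combination (norm := module) hEq
  obtain ⟨e0, e1, e2⟩ := triple_li_coords h hc
  apply hst
  funext i
  fin_cases i
  · exact sub_eq_zero.mp e0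
  · exact sub_eq_zero.mp e1
  · exact sub_eq_zero.mp e2

end LinAlg

section Bridge
variable {𝔽 : Type} [Field 𝔽] {n : ℕ} {v : α → Fin n → 𝔽}

def IsRep (M : Matroid α) (v : α → Fin n → 𝔽) : Prop :=
  ∀ I : Set α, M.Indep I ↔ (I ⊆ M.E ∧ LinearIndependent 𝔽 (fun x : I => v x))

omit [Fintype α] in
lemma rep_indep_iff (hv : IsRep M v) {k : ℕ} {e : Fin k → α}
    (he : Function.Injective e) (hE : ∀ i, e i ∈ M.E) :
    M.Indep (Set.range e) ↔ LinearIndependent 𝔽 (v ∘ e) := by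
  rw [hv]
  have h1 : Set.range e ⊆ M.E := by rintro _ ⟨i, rfl⟩; exact hE i
  simp only [h1, true_and]
  rw [← linearIndependent_equiv (Equiv.ofInjective e he)
    (f := fun x : Set.range e => v x)]
  have : (fun x : Set.range e => v x) ∘ (Equiv.ofInjective e he) = v ∘ e := by
    funext i
    simp [Equiv.ofInjective]
  rw [this]

omit [Fintype α] in
lemma range_pair (a b : α) : Set.range ![a, b] = {a, b} := by
  ext x
  constructor
  · rintro ⟨i, rfl⟩; fin_cases i <;> simp
  · rintro (rfl | rfl)
    exacts [⟨0, rfl⟩, ⟨1, rfl⟩]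

omit [Fintype α] in
lemma range_triple (a b c : α) : Set.range ![a, b, c] = {a, b, c} := by
  ext x
  constructor
  · rintro ⟨i, rfl⟩; fin_cases i <;> simp
  · rintro (rfl | rfl | rfl)
    exacts [⟨0, rfl⟩, ⟨1, rfl⟩, ⟨2, rfl⟩]

omit [Fintype α] in
lemma inj_pair {a b : α} (hab : a ≠ b) : Function.Injective ![a, b] := by
  intro i j hij
  fin_cases i <;> fin_cases j <;> simp_all

omit [Fintype α] in
lemma inj_triple {a b c : α} (hab : a ≠ b) (hac : a ≠ c) (hbc : b ≠ c) :
    Function.Injective ![a, b, c] := by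
  intro i j hij
  fin_cases i <;> fin_cases j <;> simp_all

omit [Fintype α] in
lemma indep_pair_iff (hv : IsRep M v) {a b : α} (hab : a ≠ b)
    (ha : a ∈ M.E) (hb : b ∈ M.E) :
    M.Indep {a, b} ↔ LinearIndependent 𝔽 ![v a, v b] := by
  rw [← range_pair, rep_indep_iff hv (inj_pair hab)
    (by intro i; fin_cases i <;> assumption)]
  have : v ∘ ![a, b] = ![v a, v b] := by
    funext i; fin_cases i <;> simp
  rw [this]

omit [Fintype α] in
lemma indep_triple_iff (hv : IsRep M v) {a b c : α} (hab : a ≠ b) (hac : a ≠ c)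
    (hbc : b ≠ c) (ha : a ∈ M.E) (hb : b ∈ M.E) (hc : c ∈ M.E) :
    M.Indep {a, b, c} ↔ LinearIndependent 𝔽 ![v a, v b, v c] := by
  rw [← range_triple, rep_indep_iff hv (inj_triple hab hac hbc)
    (by intro i; fin_cases i <;> assumption)]
  have : v ∘ ![a, b, c] = ![v a, v b, v c] := by
    funext i; fin_cases i <;> simp
  rw [this]

end Bridge

section MoreHelpers
variable {𝔽 V : Type} [Field 𝔽] [AddCommGroup V] [Module 𝔽 V]

lemma dep3' {x y z : V} (c1 c2 c3 : 𝔽) (hne : c1 ≠ 0 ∨ c2 ≠ 0 ∨ c3 ≠ 0)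
    (hsum : c1 • x + c2 • y + c3 • z = 0) : ¬ LinearIndependent 𝔽 ![x, y, z] := by
  refine Fintype.not_linearIndependent_iff.mpr ⟨![c1, c2, c3], ?_, ?_⟩
  · rw [Fin.sum_univ_three]
    simpa using hsum
  · rcases hne with h | h | h
    exacts [⟨0, by simpa⟩, ⟨1, by simpa⟩, ⟨2, by simpa⟩]

lemma extract3 {x y z : V} (h : ¬ LinearIndependent 𝔽 ![x, y, z]) :
    ∃ g : Fin 3 → 𝔽, g 0 • x + g 1 • y + g 2 • z = 0 ∧ ∃ i, g i ≠ 0 := by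
  obtain ⟨g, hsum, hi⟩ := Fintype.not_linearIndependent_iff.mp h
  refine ⟨g, ?_, hi⟩
  rw [Fin.sum_univ_three] at hsum
  simpa using hsum

lemma notall3 {g : Fin 3 → 𝔽} (h : ∃ i, g i ≠ 0) (h0 : g 0 = 0) (h1 : g 1 = 0)
    (h2 : g 2 = 0) : False := by
  obtain ⟨i, hi⟩ := h
  fin_cases i <;> simp_all

end MoreHelpers

lemma char2_self {V : Type} [AddCommGroup V] [Module (ZMod 2) V] (x : V) : x + x = 0 := by
  have h2 : (2 : ZMod 2) = 0 := by decide
  calc x + x = (2 : ZMod 2) • x := (two_smul (ZMod 2) x).symm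
    _ = 0 := by rw [h2, zero_smul]

lemma exists_indep_three (M : Matroid α) (hr : 3 ≤ rk M) :
    ∃ I, M.Indep I ∧ I.ncard = 3 := by
  have hne : {n | ∃ I, M.Indep I ∧ I.ncard = n}.Nonempty := ⟨0, ∅, M.empty_indep, by simp⟩
  have hbdd : BddAbove {n | ∃ I, M.Indep I ∧ I.ncard = n} := by
    refine ⟨Fintype.card α, ?_⟩
    rintro n ⟨J, hJ, rfl⟩
    calc J.ncard ≤ (Set.univ : Set α).ncard := Set.ncard_le_ncard (Set.subset_univ J) Set.finite_univ
      _ = Fintype.card α := by simp [Set.ncard_univ]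
  obtain ⟨I, hI, hIc⟩ := Nat.sSup_mem hne hbdd
  have h3 : 3 ≤ I.ncard := by rw [hIc]; exact hr
  obtain ⟨t, hts, htc⟩ := Set.exists_subset_card_eq h3
  exact ⟨t, hI.subset hts, htc⟩

set_option maxHeartbeats 2000000 in
theorem modular_not_regular_aux {α : Type} [Fintype α] (M : Matroid α)
    (hs : Simple M) (hc : Connected M) (hr : 3 ≤ rk M) (hmod : ModularFlats M) :
    ∃ (𝔽 : Type) (_ : Field 𝔽), ¬ Representable M 𝔽 := by
  by_contra hcon
  have hrep : ∀ (𝔽 : Type) (inst : Field 𝔽), @Representable α M 𝔽 inst := by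
    intro 𝔽 inst
    by_contra hnot
    exact hcon ⟨𝔽, inst, hnot⟩
  obtain ⟨n, v, hv⟩ := hrep (ZMod 2) inferInstance
  obtain ⟨m, w, hw⟩ := hrep ℚ inferInstance
  -- an independent triple
  obtain ⟨I, hI, hI3⟩ := exists_indep_three M hr
  obtain ⟨a, b, c, hab, hac, hbc, rfl⟩ := Set.ncard_eq_three.mp hI3
  have ha : a ∈ M.E := hI.subset_ground (by simp)
  have hb : b ∈ M.E := hI.subset_ground (by simp)
  have hcE : c ∈ M.E := hI.subset_ground (by simp)
  have hV2 : LinearIndependent (ZMod 2) ![v a, v b, v c] :=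
    (indep_triple_iff hv hab hac hbc ha hb hcE).mp hI
  have hQ : LinearIndependent ℚ ![w a, w b, w c] :=
    (indep_triple_iff hw hab hac hbc ha hb hcE).mp hI
  -- all pairs are independent
  have P : ∀ x y : α, x ∈ M.E → y ∈ M.E → M.Indep {x, y} :=
    fun x y hx hy => indep_pair hs hx hy
  -- third points on the three lines of the triangle
  obtain ⟨d, hdcl, hda, hdb, hdE⟩ := exists_third_point hs hc hmod ha hb hab
  obtain ⟨e, hecl, heb, hec, heE⟩ := exists_third_point hs hc hmod hb hcE hbc
  obtain ⟨f, hfcl, hfa, hfc, hfE⟩ := exists_third_point hs hc hmod ha hcE hac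
  -- dependencies from the closures
  have hdep_abd : M.Dep {a, b, d} := by
    have h0 : M.Dep {d, a, b} := (P a b ha hb).insert_dep_iff.mpr ⟨hdcl, by simp [hda, hdb]⟩
    rwa [(by ext t; simp; tauto : ({d, a, b} : Set α) = {a, b, d})] at h0
  have hdep_bce : M.Dep {b, c, e} := by
    have h0 : M.Dep {e, b, c} := (P b c hb hcE).insert_dep_iff.mpr ⟨hecl, by simp [heb, hec]⟩
    rwa [(by ext t; simp; tauto : ({e, b, c} : Set α) = {b, c, e})] at h0
  have hdep_acf : M.Dep {a, c, f} := by
    have h0 : M.Dep {f, a, c} := (P a c ha hcE).insert_dep_iff.mpr ⟨hfcl, by simp [hfa, hfc]⟩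
    rwa [(by ext t; simp; tauto : ({f, a, c} : Set α) = {a, c, f})] at h0
  -- GF(2) coordinates of d, e, f
  have hone : ∀ t : ZMod 2, t ≠ 0 → t = 1 := by decide
  have hvd : v d = v a + v b := by
    obtain ⟨p, q, hp, hq, hz⟩ := resolve
      ((indep_pair_iff hv hab ha hb).mp (P a b ha hb))
      ((indep_pair_iff hv (Ne.symm hda) ha hdE).mp (P a d ha hdE))
      ((indep_pair_iff hv (Ne.symm hdb) hb hdE).mp (P b d hb hdE))
      (fun h => hdep_abd.not_indep
        ((indep_triple_iff hv hab (Ne.symm hda) (Ne.symm hdb) ha hb hdE).mpr h))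
    rw [hz, hone p hp, hone q hq, one_smul, one_smul]
  have hve : v e = v b + v c := by
    obtain ⟨p, q, hp, hq, hz⟩ := resolve
      ((indep_pair_iff hv hbc hb hcE).mp (P b c hb hcE))
      ((indep_pair_iff hv (Ne.symm heb) hb heE).mp (P b e hb heE))
      ((indep_pair_iff hv (Ne.symm hec) hcE heE).mp (P c e hcE heE))
      (fun h => hdep_bce.not_indep
        ((indep_triple_iff hv hbc (Ne.symm heb) (Ne.symm hec) hb hcE heE).mpr h))
    rw [hz, hone p hp, hone q hq, one_smul, one_smul]
  have hvf : v f = v a + v c := by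
    obtain ⟨p, q, hp, hq, hz⟩ := resolve
      ((indep_pair_iff hv hac ha hcE).mp (P a c ha hcE))
      ((indep_pair_iff hv (Ne.symm hfa) ha hfE).mp (P a f ha hfE))
      ((indep_pair_iff hv (Ne.symm hfc) hcE hfE).mp (P c f hcE hfE))
      (fun h => hdep_acf.not_indep
        ((indep_triple_iff hv hac (Ne.symm hfa) (Ne.symm hfc) ha hcE hfE).mpr h))
    rw [hz, hone p hp, hone q hq, one_smul, one_smul]
  -- distinctness of the configuration points, via GF(2) vectors
  have vne : ∀ {x y : α}, v x ≠ v y → x ≠ y := fun h heq => h (by rw [heq])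
  have hcd : c ≠ d := by
    refine vne ?_
    rw [hvd]
    have := li3_ne hV2 ![0, 0, 1] ![1, 1, 0] (by decide)
    simpa using this
  have hae : a ≠ e := by
    refine vne ?_
    rw [hve]
    have := li3_ne hV2 ![1, 0, 0] ![0, 1, 1] (by decide)
    simpa using this
  have hde : d ≠ e := by
    refine vne ?_
    rw [hvd, hve]
    have := li3_ne hV2 ![1, 1, 0] ![0, 1, 1] (by decide)
    simpa using this
  have hdf : d ≠ f := by
    refine vne ?_
    rw [hvd, hvf]
    have := li3_ne hV2 ![1, 1, 0] ![1, 0, 1] (by decide)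
    simpa using this
  have hef : e ≠ f := by
    refine vne ?_
    rw [hve, hvf]
    have := li3_ne hV2 ![0, 1, 1] ![1, 0, 1] (by decide)
    simpa using this
  have hbf : b ≠ f := by
    refine vne ?_
    rw [hvf]
    have := li3_ne hV2 ![0, 1, 0] ![1, 0, 1] (by decide)
    simpa using this
  -- GF(2) independence facts
  have LIacd : LinearIndependent (ZMod 2) ![v a, v c, v d] := by
    rw [hvd]
    have := li3_matrix hV2 !![1,0,0; 0,0,1; 1,1,0] (by decide)
    simpa using this
  have LIcae : LinearIndependent (ZMod 2) ![v c, v a, v e] := by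
    rw [hve]
    have := li3_matrix hV2 !![0,0,1; 1,0,0; 0,1,1] (by decide)
    simpa using this
  have LIdae : LinearIndependent (ZMod 2) ![v d, v a, v e] := by
    rw [hvd, hve]
    have := li3_matrix hV2 !![1,1,0; 1,0,0; 0,1,1] (by decide)
    simpa using this
  have LIecd : LinearIndependent (ZMod 2) ![v e, v c, v d] := by
    rw [hvd, hve]
    have := li3_matrix hV2 !![0,1,1; 0,0,1; 1,1,0] (by decide)
    simpa using this
  -- b lies on the line through a and d
  have hnv_bad : ¬ LinearIndependent (ZMod 2) ![v b, v a, v d] := by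
    apply dep3' 1 1 1 (Or.inl one_ne_zero)
    rw [hvd, one_smul, one_smul, one_smul]
    have h1 : v b + v a + (v a + v b) = (v a + v a) + (v b + v b) := by abel
    rw [h1, char2_self, char2_self, add_zero]
  have hbad : b ∈ M.closure {a, d} := by
    rw [(P a d ha hdE).mem_closure_iff]
    left
    exact ⟨fun hind => hnv_bad ((indep_triple_iff hv (Ne.symm hab) (Ne.symm hdb)
      (Ne.symm hda) hb ha hdE).mp hind), by rintro t (rfl | rfl | rfl) <;> assumption⟩
  have hacdE : ({a, c, d} : Set α) ⊆ M.E := by rintro t (rfl | rfl | rfl) <;> assumption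
  have hespan : e ∈ M.closure {a, c, d} := by
    refine (M.closure_subset_closure_of_subset_closure ?_) hecl
    rintro t (rfl | rfl)
    · refine M.closure_subset_closure ?_ hbad
      rintro s (rfl | rfl)
      · simp
      · simp
    · exact M.subset_closure _ hacdE (by simp)
  -- the lines cd and ae meet in a point g
  have hIacd : M.Indep {a, c, d} :=
    (indep_triple_iff hv hac (Ne.symm hda) hcd ha hcE hdE).mpr LIacd
  obtain ⟨g, hgE, hgcd, hgae⟩ := lines_meet hmod (P c d hcE hdE) hcd (P a e ha heE) hae
    hIacd (Set.ncard_eq_three.mpr ⟨a, c, d, hac, Ne.symm hda, hcd, rfl⟩)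
    (by rintro t (rfl | rfl | rfl)
        · exact Or.inr (by simp)
        · exact Or.inl (by simp)
        · exact Or.inl (by simp))
    (by rintro t ht
        rcases ht with (rfl | rfl) | (rfl | rfl)
        · exact M.subset_closure _ hacdE (by simp)
        · exact M.subset_closure _ hacdE (by simp)
        · exact M.subset_closure _ hacdE (by simp)
        · exact hespan)
  -- g is distinct from a, c, d, e
  have hcae' : c ∉ M.closure {a, e} := by
    rw [(P a e ha heE).mem_closure_iff]
    rintro (hdep | hmem)
    · exact hdep.not_indep ((indep_triple_iff hv (Ne.symm hac) (Ne.symm hec) hae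
        hcE ha heE).mpr LIcae)
    · rcases hmem with rfl | rfl
      · exact hac rfl
      · exact hec rfl
  have hdae' : d ∉ M.closure {a, e} := by
    rw [(P a e ha heE).mem_closure_iff]
    rintro (hdep | hmem)
    · exact hdep.not_indep ((indep_triple_iff hv hda hde hae hdE ha heE).mpr LIdae)
    · rcases hmem with rfl | rfl
      · exact hda rfl
      · exact hde rfl
  have hacd' : a ∉ M.closure {c, d} := by
    rw [(P c d hcE hdE).mem_closure_iff]
    rintro (hdep | hmem)
    · exact hdep.not_indep ((indep_triple_iff hv hac (Ne.symm hda) hcd ha hcE hdE).mpr LIacd)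
    · rcases hmem with rfl | rfl
      · exact hac rfl
      · exact hda rfl
  have hecd' : e ∉ M.closure {c, d} := by
    rw [(P c d hcE hdE).mem_closure_iff]
    rintro (hdep | hmem)
    · exact hdep.not_indep ((indep_triple_iff hv hec (Ne.symm hde) hcd
        heE hcE hdE).mpr LIecd)
    · rcases hmem with rfl | rfl
      · exact hec rfl
      · exact hde rfl
  have hgc : g ≠ c := fun h => hcae' (h ▸ hgae)
  have hgd : g ≠ d := fun h => hdae' (h ▸ hgae)
  have hga : g ≠ a := fun h => hacd' (h ▸ hgcd)
  have hge : g ≠ e := fun h => hecd' (h ▸ hgcd)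
  -- dependencies involving g
  have hdep_cdg : M.Dep {c, d, g} := by
    have h0 : M.Dep {g, c, d} := (P c d hcE hdE).insert_dep_iff.mpr
      ⟨hgcd, by simp [hgc, hgd]⟩
    rwa [(by ext t; simp; tauto : ({g, c, d} : Set α) = {c, d, g})] at h0
  have hdep_aeg : M.Dep {a, e, g} := by
    have h0 : M.Dep {g, a, e} := (P a e ha heE).insert_dep_iff.mpr
      ⟨hgae, by simp [hga, hge]⟩
    rwa [(by ext t; simp; tauto : ({g, a, e} : Set α) = {a, e, g})] at h0
  -- GF(2) coordinates of g
  have hnv_cdg : ¬ LinearIndependent (ZMod 2) ![v c, v d, v g] :=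
    fun h => hdep_cdg.not_indep
      ((indep_triple_iff hv hcd (Ne.symm hgc) (Ne.symm hgd) hcE hdE hgE).mpr h)
  have hvg : v g = v a + v b + v c := by
    obtain ⟨p, q, hp, hq, hz⟩ := resolve
      ((indep_pair_iff hv hcd hcE hdE).mp (P c d hcE hdE))
      ((indep_pair_iff hv (Ne.symm hgc) hcE hgE).mp (P c g hcE hgE))
      ((indep_pair_iff hv (Ne.symm hgd) hdE hgE).mp (P d g hdE hgE))
      hnv_cdg
    rw [hz, hone p hp, hone q hq, one_smul, one_smul, hvd]
    abel
  have hbg : b ≠ g := by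
    refine vne ?_
    rw [hvg]
    have := li3_ne hV2 ![0, 1, 0] ![1, 1, 1] (by decide)
    simpa using this
  have hfg : f ≠ g := by
    refine vne ?_
    rw [hvf, hvg]
    have := li3_ne hV2 ![1, 0, 1] ![1, 1, 1] (by decide)
    simpa using this
  -- the two extra dependencies {b,f,g} and {d,e,f}, from GF(2)
  have hdep_bfg : M.Dep {b, f, g} := by
    refine ⟨fun hind => ?_, by rintro t (rfl | rfl | rfl) <;> assumption⟩
    have hLI := (indep_triple_iff hv hbf hbg hfg hb hfE hgE).mp hind
    refine dep3' (𝔽 := ZMod 2) 1 1 1 (Or.inl one_ne_zero) ?_ hLI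
    rw [hvf, hvg, one_smul, one_smul, one_smul]
    have h1 : v b + (v a + v c) + (v a + v b + v c)
        = (v a + v a) + ((v b + v b) + (v c + v c)) := by abel
    rw [h1, char2_self, char2_self, char2_self, add_zero, add_zero]
  have hdep_def : M.Dep {d, e, f} := by
    refine ⟨fun hind => ?_, by rintro t (rfl | rfl | rfl) <;> assumption⟩
    have hLI := (indep_triple_iff hv hde hdf hef hdE heE hfE).mp hind
    refine dep3' (𝔽 := ZMod 2) 1 1 1 (Or.inl one_ne_zero) ?_ hLI
    rw [hvd, hve, hvf, one_smul, one_smul, one_smul]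
    have h1 : v a + v b + (v b + v c) + (v a + v c)
        = (v a + v a) + ((v b + v b) + (v c + v c)) := by abel
    rw [h1, char2_self, char2_self, char2_self, add_zero, add_zero]
  -- now work over ℚ
  have QP : ∀ x y : α, x ≠ y → x ∈ M.E → y ∈ M.E → LinearIndependent ℚ ![w x, w y] :=
    fun x y hxy hx hy => (indep_pair_iff hw hxy hx hy).mp (P x y hx hy)
  obtain ⟨α1, β1, hα1, hβ1, hwd⟩ := resolve (QP a b hab ha hb)
    (QP a d (Ne.symm hda) ha hdE) (QP b d (Ne.symm hdb) hb hdE)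
    (fun h => hdep_abd.not_indep
      ((indep_triple_iff hw hab (Ne.symm hda) (Ne.symm hdb) ha hb hdE).mpr h))
  obtain ⟨β2, γ2, hβ2, hγ2, hwe⟩ := resolve (QP b c hbc hb hcE)
    (QP b e (Ne.symm heb) hb heE) (QP c e (Ne.symm hec) hcE heE)
    (fun h => hdep_bce.not_indep
      ((indep_triple_iff hw hbc (Ne.symm heb) (Ne.symm hec) hb hcE heE).mpr h))
  obtain ⟨α3, γ3, hα3, hγ3, hwf⟩ := resolve (QP a c hac ha hcE)
    (QP a f (Ne.symm hfa) ha hfE) (QP c f (Ne.symm hfc) hcE hfE)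
    (fun h => hdep_acf.not_indep
      ((indep_triple_iff hw hac (Ne.symm hfa) (Ne.symm hfc) ha hcE hfE).mpr h))
  obtain ⟨p, q, hp, hq, hwg⟩ := resolve (QP c d hcd hcE hdE)
    (QP c g (Ne.symm hgc) hcE hgE) (QP d g (Ne.symm hgd) hdE hgE)
    (fun h => hdep_cdg.not_indep
      ((indep_triple_iff hw hcd (Ne.symm hgc) (Ne.symm hgd) hcE hdE hgE).mpr h))
  -- the three ℚ-dependencies
  obtain ⟨g1, hs1, hi1⟩ := extract3 (V := Fin m → ℚ)
    (fun h => hdep_aeg.not_indep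
      ((indep_triple_iff hw hae hga.symm hge.symm ha heE hgE).mpr h))
  obtain ⟨g2, hs2, hi2⟩ := extract3 (V := Fin m → ℚ)
    (fun h => hdep_bfg.not_indep
      ((indep_triple_iff hw hbf hbg hfg hb hfE hgE).mpr h))
  obtain ⟨g3, hs3, hi3⟩ := extract3 (V := Fin m → ℚ)
    (fun h => hdep_def.not_indep
      ((indep_triple_iff hw hde hdf hef hdE heE hfE).mpr h))
  -- rewrite everything in the basis wa, wb, wc
  rw [hwe, hwg, hwd] at hs1
  rw [hwf, hwg, hwd] at hs2
  rw [hwd, hwe, hwf] at hs3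
  have hco1 : (g1 0 + g1 2 * (q * α1)) • w a + (g1 1 * β2 + g1 2 * (q * β1)) • w b
      + (g1 1 * γ2 + g1 2 * p) • w c = 0 := by
    linear_combination (norm := module) hs1
  have hco2 : (g2 1 * α3 + g2 2 * (q * α1)) • w a + (g2 0 + g2 2 * (q * β1)) • w b
      + (g2 1 * γ3 + g2 2 * p) • w c = 0 := by
    linear_combination (norm := module) hs2
  have hco3 : (g3 0 * α1 + g3 1 * 0 + g3 2 * α3) • w a + (g3 0 * β1 + g3 1 * β2) • w b
      + (g3 1 * γ2 + g3 2 * γ3) • w c = 0 := by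
    linear_combination (norm := module) hs3
  obtain ⟨e11, e12, e13⟩ := triple_li_coords hQ hco1
  obtain ⟨e21, e22, e23⟩ := triple_li_coords hQ hco2
  obtain ⟨e31, e32, e33⟩ := triple_li_coords hQ hco3
  -- nonvanishing of the key coefficients
  have hz1 : g1 2 ≠ 0 := by
    intro h
    have hy : g1 1 = 0 := by
      have h' : g1 1 * β2 = 0 := by linear_combination e12 - (q * β1) * h
      exact (mul_eq_zero.mp h').resolve_right hβ2
    have hx : g1 0 = 0 := by linear_combination e11 - (q * α1) * h
    exact notall3 hi1 hx hy h
  have hz2 : g2 2 ≠ 0 := by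
    intro h
    have hy : g2 1 = 0 := by
      have h' : g2 1 * α3 = 0 := by linear_combination e21 - (q * α1) * h
      exact (mul_eq_zero.mp h').resolve_right hα3
    have hx : g2 0 = 0 := by linear_combination e22 - (q * β1) * h
    exact notall3 hi2 hx hy h
  have hx3 : g3 0 ≠ 0 := by
    intro h
    have hz' : g3 2 = 0 := by
      have h' : g3 2 * α3 = 0 := by linear_combination e31 - α1 * h
      exact (mul_eq_zero.mp h').resolve_right hα3
    have hy' : g3 1 = 0 := by
      have h' : g3 1 * β2 = 0 := by linear_combination e32 - β1 * h
      exact (mul_eq_zero.mp h').resolve_right hβ2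
    exact notall3 hi3 h hy' hz'
  have hy3 : g3 1 ≠ 0 := by
    intro h
    have hx' : g3 0 = 0 := by
      have h' : g3 0 * β1 = 0 := by linear_combination e32 - β2 * h
      exact (mul_eq_zero.mp h').resolve_right hβ1
    exact hx3 hx'
  have hz3 : g3 2 ≠ 0 := by
    intro h
    have hy' : g3 1 = 0 := by
      have h' : g3 1 * γ2 = 0 := by linear_combination e33 - γ3 * h
      exact (mul_eq_zero.mp h').resolve_right hγ2
    exact hy3 hy'
  -- the three projective relations
  have E1 : q * β1 * γ2 = p * β2 := by
    have h' : g1 2 * (q * β1 * γ2 - p * β2) = 0 := by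
      linear_combination γ2 * e12 - β2 * e13
    have := (mul_eq_zero.mp h').resolve_left hz1
    linarith [this]
  have E2 : q * α1 * γ3 = p * α3 := by
    have h' : g2 2 * (q * α1 * γ3 - p * α3) = 0 := by
      linear_combination γ3 * e21 - α3 * e23
    have := (mul_eq_zero.mp h').resolve_left hz2
    linarith [this]
  have E3 : α1 * β2 * γ3 + α3 * β1 * γ2 = 0 := by
    have h' : (g3 0 * g3 1 * g3 2) * (α1 * β2 * γ3 + α3 * β1 * γ2) = 0 := by
      linear_combination (g3 1 * g3 2 * β2 * γ3) * e31 + (g3 1 * g3 2 * α3 * γ2) * e32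
        - (g3 1 * g3 2 * α3 * β2) * e33
    have := (mul_eq_zero.mp h').resolve_left
      (mul_ne_zero (mul_ne_zero hx3 hy3) hz3)
    exact this
  -- contradiction : 2 = 0 in ℚ
  have hfinal : (2 : ℚ) * (p * (α3 * (β1 * γ2))) = 0 := by
    linear_combination α1 * γ3 * E1 - β1 * γ2 * E2 + p * E3
  exact (mul_ne_zero two_ne_zero (mul_ne_zero hp (mul_ne_zero hα3
    (mul_ne_zero hβ1 hγ2)))) hfinal

/-- Let `M` be a simple connected matroid of rank `r ≥ 3` on a finite ground
set whose lattice of flats is a modular lattice. Then `M` is not regular; that is, there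
exists a field over which `M` is not representable. -/
theorem modular_not_regular {α : Type} [Fintype α] (M : Matroid α)
    (hs : Simple M) (hc : Connected M) (hr : 3 ≤ rk M) (hmod : ModularFlats M) :
    ∃ (𝔽 : Type) (_ : Field 𝔽), ¬ Representable M 𝔽 :=
  modular_not_regular_aux M hs hc hr hmod

end KL
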